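/- arXiv:1106.2267 — 11 statements merged into one kernel-verified Lean document; each statement's English description precedes it below -/
import Mathlib

section
/- For any finite subsets A, B, S of a multiplicative group G and any real number K, defining c(X) := |X·S| − K|X|, one has c(A ∪ B) + c(A ∩ B) ≤ c(A) + c(B). -/
open scoped Pointwise

theorem submodularity {G : Type*} [Group G] [DecidableEq G]
    (A B S : Finset G) (K : ℝ) :
    (((A ∪ B) * S).card : ℝ) - K * (A ∪ B).card
      + ((((A ∩ B) * S).card : ℝ) - K * (A ∩ B).card)
    ≤ (((A * S).card : ℝ) - K * A.card) + (((B * S).card : ℝ) - K * B.card) := by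
  have h1 : ((A ∪ B) * S).card + ((A ∩ B) * S).card ≤ (A * S).card + (B * S).card := by
    calc ((A ∪ B) * S).card + ((A ∩ B) * S).card
        ≤ ((A * S) ∪ (B * S)).card + ((A * S) ∩ (B * S)).card := by
          refine Nat.add_le_add (Finset.card_le_card ?_) (Finset.card_le_card ?_)
          · rw [Finset.union_mul]
          · exact Finset.inter_mul_subset
      _ = (A * S).card + (B * S).card := Finset.card_union_add_card_inter _ _
  have h2 : (A ∪ B).card + (A ∩ B).card = A.card + B.card :=
    Finset.card_union_add_card_inter _ _
  have h1' : (((A ∪ B) * S).card : ℝ) + ((A ∩ B) * S).card ≤ (A * S).card + (B * S).card := by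
    exact_mod_cast h1
  have h2' : ((A ∪ B).card : ℝ) + (A ∩ B).card = A.card + B.card := by exact_mod_cast h2
  have h3 : K * ((A ∪ B).card : ℝ) + K * ((A ∩ B).card : ℝ)
      = K * (A.card : ℝ) + K * (B.card : ℝ) := by
    rw [← mul_add, ← mul_add, h2']
  linarith
end

section
/- Let G be a group, S a finite non-empty subset, K < 1, and define c(A) = |A·S| − K|A| and κ = inf over finite non-empty A of c(A). If A and B are finite non-empty sets with c(A) = c(B) = κ and A ∩ B ≠ ∅, then c(A ∪ B) = κ and c(A ∩ B) = κ. -/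
open scoped Pointwise

theorem fragments_union_inter {G : Type*} [Group G] [DecidableEq G]
    (S : Finset G) (hS : S.Nonempty) (K : ℝ) (hK : K < 1) (κ : ℝ)
    (hκ : ∀ C : Finset G, C.Nonempty → κ ≤ ((C * S).card : ℝ) - K * C.card)
    (A B : Finset G) (hA : A.Nonempty) (hB : B.Nonempty)
    (hAfrag : ((A * S).card : ℝ) - K * A.card = κ)
    (hBfrag : ((B * S).card : ℝ) - K * B.card = κ)
    (hAB : (A ∩ B).Nonempty) :
    (((A ∪ B) * S).card : ℝ) - K * (A ∪ B).card = κ ∧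
      (((A ∩ B) * S).card : ℝ) - K * (A ∩ B).card = κ := by
  have hU := hκ (A ∪ B) (hA.mono Finset.subset_union_left)
  have hI := hκ (A ∩ B) hAB
  have hcard : (A ∪ B).card + (A ∩ B).card = A.card + B.card :=
    Finset.card_union_add_card_inter A B
  have hmulU : (A ∪ B) * S = A * S ∪ B * S := Finset.union_mul
  have hmulI : (A ∩ B) * S ⊆ (A * S) ∩ (B * S) := Finset.inter_mul_subset
  have h1 : ((A ∪ B) * S).card + ((A ∩ B) * S).card ≤ (A * S).card + (B * S).card := by
    calc ((A ∪ B) * S).card + ((A ∩ B) * S).card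
        ≤ (A * S ∪ B * S).card + ((A * S) ∩ (B * S)).card := by
          rw [hmulU]; exact Nat.add_le_add_left (Finset.card_le_card hmulI) _
      _ = (A * S).card + (B * S).card := Finset.card_union_add_card_inter _ _
  have h1' : (((A ∪ B) * S).card : ℝ) + ((A ∩ B) * S).card ≤ (A * S).card + (B * S).card := by
    exact_mod_cast h1
  have hcard' : ((A ∪ B).card : ℝ) + (A ∩ B).card = A.card + B.card := by exact_mod_cast hcard
  constructor <;> nlinarith [hU, hI, h1', hcard']
end

section
/- Let G be a group, S a finite non-empty subset, K < 1, and define fragments as finite non-empty minimizers of c(A) = |A·S| − K|A|, and atoms as fragments of minimal cardinality. Then any two atoms are either equal or disjoint. -/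
open scoped Pointwise

theorem atoms_eq_or_disjoint {G : Type*} [Group G] [DecidableEq G]
    (S : Finset G) (hS : S.Nonempty) (K : ℝ) (hK : K < 1) (κ : ℝ)
    (hκ : ∀ C : Finset G, C.Nonempty → κ ≤ ((C * S).card : ℝ) - K * C.card)
    (A B : Finset G) (hA : A.Nonempty) (hB : B.Nonempty)
    (hAfrag : ((A * S).card : ℝ) - K * A.card = κ)
    (hBfrag : ((B * S).card : ℝ) - K * B.card = κ)
    (hAmin : ∀ C : Finset G, C.Nonempty →
      ((C * S).card : ℝ) - K * C.card = κ → A.card ≤ C.card)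
    (hBmin : ∀ C : Finset G, C.Nonempty →
      ((C * S).card : ℝ) - K * C.card = κ → B.card ≤ C.card) :
    A = B ∨ Disjoint A B := by
  by_cases hd : Disjoint A B
  · exact Or.inr hd
  left
  have hint : (A ∩ B).Nonempty := Finset.not_disjoint_iff_nonempty_inter.mp hd
  have hun : (A ∪ B).Nonempty := hA.mono Finset.subset_union_left
  -- (A ∪ B) * S = A*S ∪ B*S
  have hUS : (A ∪ B) * S = A * S ∪ B * S := Finset.union_mul
  -- (A ∩ B) * S ⊆ (A*S) ∩ (B*S)
  have hIS : (A ∩ B) * S ⊆ (A * S) ∩ (B * S) := by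
    intro x hx
    rw [Finset.mem_inter]
    exact ⟨Finset.mul_subset_mul_right Finset.inter_subset_left hx,
      Finset.mul_subset_mul_right Finset.inter_subset_right hx⟩
  have hcard1 : (A ∪ B).card + (A ∩ B).card = A.card + B.card :=
    Finset.card_union_add_card_inter A B
  have hcard2 : ((A ∪ B) * S).card + ((A ∩ B) * S).card ≤ (A * S).card + (B * S).card := by
    calc ((A ∪ B) * S).card + ((A ∩ B) * S).card
        ≤ (A * S ∪ B * S).card + ((A * S) ∩ (B * S)).card := by
          rw [hUS]; exact Nat.add_le_add_left (Finset.card_le_card hIS) _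
      _ = (A * S).card + (B * S).card := Finset.card_union_add_card_inter _ _
  have hU : κ ≤ ((A ∪ B) * S).card - K * (A ∪ B).card := hκ _ hun
  have hI : κ ≤ ((A ∩ B) * S).card - K * (A ∩ B).card := hκ _ hint
  have hsum : (((A ∪ B) * S).card - K * (A ∪ B).card) + (((A ∩ B) * S).card - K * (A ∩ B).card)
      ≤ κ + κ := by
    have h1 : ((A ∪ B).card : ℝ) + (A ∩ B).card = A.card + B.card := by
      exact_mod_cast hcard1
    have h2 : (((A ∪ B) * S).card : ℝ) + ((A ∩ B) * S).card ≤ (A * S).card + (B * S).card := by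
      exact_mod_cast hcard2
    nlinarith [hAfrag, hBfrag]
  have hIeq : ((A ∩ B) * S).card - K * (A ∩ B).card = κ := by linarith
  have hAle : A.card ≤ (A ∩ B).card := hAmin _ hint hIeq
  have hBle : B.card ≤ (A ∩ B).card := hBmin _ hint hIeq
  have hAeq : A ∩ B = A := Finset.eq_of_subset_of_card_le Finset.inter_subset_left hAle
  have hBeq : A ∩ B = B := Finset.eq_of_subset_of_card_le Finset.inter_subset_right hBle
  rw [← hAeq, hBeq]
end

section
/- Petridis's lemma: let A, S be finite non-empty subsets of a multiplicative group G with |A·S| ≤ α|A| for some real α. Then there exists a non-empty subset X ⊆ A such that |C·X·S| ≤ α|C·X| for all finite subsets C of G. -/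
/-!
Take `X ⊆ A` non-empty minimizing `|X S| / |X|`. Minimality says that every subset of `X` expands
by `S` at least as much as `X` does, which is the hypothesis of the Plünnecke–Petridis inequality
`|C X S| |X| ≤ |X S| |C X|`; and `|X S| / |X| ≤ |A S| / |A| ≤ α`.
-/

open Finset
open scoped Pointwise

theorem Finset.exists_nonempty_subset_forall_mul_card_le {ι : Type*} (f : Finset ι → ℕ)
    {A : Finset ι} (hA : A.Nonempty) :
    ∃ X ⊆ A, X.Nonempty ∧ ∀ Y ⊆ A, f X * #Y ≤ f Y * #X := by
  obtain ⟨X, hX, hmin⟩ := exists_min_image (A.powerset.filter Finset.Nonempty)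
    (fun Y ↦ (f Y : ℚ) / #Y) ⟨A, mem_filter.2 ⟨mem_powerset_self A, hA⟩⟩
  obtain ⟨hXA, hXne⟩ := mem_filter.1 hX
  refine ⟨X, mem_powerset.1 hXA, hXne, fun Y hYA ↦ ?_⟩
  obtain rfl | hYne := Y.eq_empty_or_nonempty
  · simp
  have hY := hmin Y (mem_filter.2 ⟨mem_powerset.2 hYA, hYne⟩)
  rw [div_le_div_iff₀ (mod_cast hXne.card_pos) (mod_cast hYne.card_pos)] at hY
  exact_mod_cast hY

theorem petridis_general {G : Type*} [Group G] [DecidableEq G]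
    (A S : Finset G) (hA : A.Nonempty) (α : ℝ)
    (hAS : ((A * S).card : ℝ) ≤ α * A.card) :
    ∃ X ⊆ A, X.Nonempty ∧
      ∀ C : Finset G, ((C * X * S).card : ℝ) ≤ α * (C * X).card := by
  obtain ⟨X, hXA, hX, hmin⟩ := exists_nonempty_subset_forall_mul_card_le (fun Y ↦ #(Y * S)) hA
  refine ⟨X, hXA, hX, fun C ↦ ?_⟩
  have hXpos : (0 : ℝ) < #X := mod_cast hX.card_pos
  have hXS : (#(X * S) : ℝ) ≤ α * #X := by
    refine le_of_mul_le_mul_right ?_ (show (0 : ℝ) < #A from mod_cast hA.card_pos)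
    calc (#(X * S) : ℝ) * #A ≤ #(A * S) * #X := mod_cast hmin A subset_rfl
      _ ≤ α * #A * #X := by gcongr
      _ = α * #X * #A := by ring
  refine le_of_mul_le_mul_right ?_ hXpos
  calc (#(C * X * S) : ℝ) * #X ≤ #(X * S) * #(C * X) :=
        mod_cast pluennecke_petridis_inequality_mul C fun Y hY ↦ hmin Y (hY.trans hXA)
    _ ≤ α * #X * #(C * X) := by gcongr
    _ = α * #(C * X) * #X := by ring

theorem petridis {G : Type*} [Group G] [DecidableEq G]
    (A S : Finset G) (hA : A.Nonempty) (hS : S.Nonempty) (α : ℝ)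
    (hAS : ((A * S).card : ℝ) ≤ α * A.card) :
    ∃ X ⊆ A, X.Nonempty ∧
      ∀ C : Finset G, ((C * X * S).card : ℝ) ≤ α * (C * X).card :=
  petridis_general A S hA α hAS
end

section
/- Let G be a multiplicative group, S a finite non-empty subset, and X a finite non-empty subset minimizing K := |X·S|/|X| among non-empty subsets of a given finite set A ⊇ X. With c(Y) := |Y·S| − K|Y|, one has c(gX ∪ Z) ≤ c(Z) for every g ∈ G and every finite subset Z of G. -/
/-!
The defect `c(Y) = |Y·S| - K|Y|` is submodular, because `(B ∩ C)·S ⊆ B·S ∩ C·S`, and invariant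
under left translation. Applied to `B = g·X` and `C = Z` this gives
`c(gX ∪ Z) + c(gX ∩ Z) ≤ c(X) + c(Z)`. Here `c(X) = 0`, and `gX ∩ Z` is a translate of a subset of
`X ⊆ A`, whose defect is nonnegative by the minimality of `K`.
-/

open scoped Pointwise

namespace Finset

variable {G : Type*} [DecidableEq G]

section Mul

variable [Mul G]

theorem card_union_mul_add_card_inter_mul_le (B C S : Finset G) :
    ((B ∪ C) * S).card + ((B ∩ C) * S).card ≤ (B * S).card + (C * S).card := by
  rw [← card_union_add_card_inter (B * S), union_mul]
  exact Nat.add_le_add_left (card_le_card inter_mul_subset) _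

noncomputable def mulDefect (S : Finset G) (K : ℝ) (Y : Finset G) : ℝ :=
  ((Y * S).card : ℝ) - K * Y.card

theorem mulDefect_union_add_mulDefect_inter_le (S : Finset G) (K : ℝ) (B C : Finset G) :
    mulDefect S K (B ∪ C) + mulDefect S K (B ∩ C) ≤ mulDefect S K B + mulDefect S K C := by
  have hmul : (((B ∪ C) * S).card : ℝ) + ((B ∩ C) * S).card ≤ (B * S).card + (C * S).card :=
    mod_cast card_union_mul_add_card_inter_mul_le B C S
  have hcard : ((B ∪ C).card : ℝ) + (B ∩ C).card = B.card + C.card :=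
    mod_cast card_union_add_card_inter B C
  unfold mulDefect
  linear_combination hmul - K * hcard

theorem mulDefect_self_eq_zero (S X : Finset G) :
    mulDefect S ((X * S).card / X.card) X = 0 := by
  rw [mulDefect, div_mul_cancel_of_imp, sub_self]
  intro hX
  simp [card_eq_zero.mp (Nat.cast_eq_zero.mp hX)]

theorem mulDefect_nonneg_of_le_div {S Y : Finset G} {K : ℝ}
    (hK : Y.Nonempty → K ≤ ((Y * S).card : ℝ) / Y.card) : 0 ≤ mulDefect S K Y := by
  rcases Y.eq_empty_or_nonempty with rfl | hY
  · simp [mulDefect]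
  · have hpos : (0 : ℝ) < Y.card := mod_cast hY.card_pos
    have := (le_div_iff₀ hpos).mp (hK hY)
    unfold mulDefect
    linarith

end Mul

variable [Group G]

theorem mulDefect_smul (S : Finset G) (K : ℝ) (g : G) (Y : Finset G) :
    mulDefect S K (g • Y) = mulDefect S K Y := by
  simp only [mulDefect, smul_mul_assoc, card_smul_finset]

end Finset

open Finset in
theorem petridis_step_general {G : Type*} [Group G] [DecidableEq G]
    (A S X : Finset G) (hXA : X ⊆ A)
    (K : ℝ) (hK : K = ((X * S).card : ℝ) / X.card)
    (hmin : ∀ Y ⊆ A, Y.Nonempty → K ≤ ((Y * S).card : ℝ) / Y.card)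
    (g : G) (Z : Finset G) :
    (((g • X ∪ Z) * S).card : ℝ) - K * (g • X ∪ Z).card
      ≤ ((Z * S).card : ℝ) - K * Z.card := by
  have hX : mulDefect S K X = 0 := hK ▸ mulDefect_self_eq_zero S X
  have hinter : 0 ≤ mulDefect S K (g • X ∩ Z) := by
    rw [← mulDefect_smul S K g⁻¹]
    have hsub : g⁻¹ • (g • X ∩ Z) ⊆ A :=
      (subset_smul_finset_iff.mp inter_subset_left).trans hXA
    exact mulDefect_nonneg_of_le_div (hmin _ hsub)
  have hsubmod := mulDefect_union_add_mulDefect_inter_le S K (g • X) Z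
  rw [mulDefect_smul, hX] at hsubmod
  change mulDefect S K (g • X ∪ Z) ≤ mulDefect S K Z
  linarith

theorem petridis_step {G : Type*} [Group G] [DecidableEq G]
    (A S X : Finset G) (hS : S.Nonempty) (hX : X.Nonempty) (hXA : X ⊆ A)
    (K : ℝ) (hK : K = ((X * S).card : ℝ) / X.card)
    (hmin : ∀ Y ⊆ A, Y.Nonempty → K ≤ ((Y * S).card : ℝ) / Y.card)
    (g : G) (Z : Finset G) :
    (((g • X ∪ Z) * S).card : ℝ) - K * (g • X ∪ Z).card
      ≤ ((Z * S).card : ℝ) - K * Z.card :=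
  petridis_step_general A S X hXA K hK hmin g Z
end

section
/- Let G be a multiplicative group, S a finite non-empty subset, X a finite non-empty subset with |Y·S| ≥ K|Y| for all Y ⊆ X and |X·S| = K|X|. Then for every finite subset C of G, |C·X·S| ≤ K|C·X|. -/
open scoped Pointwise

theorem petridis_expansion {G : Type*} [Group G] [DecidableEq G]
    (S X : Finset G) (hS : S.Nonempty) (hX : X.Nonempty) (K : ℝ)
    (hlow : ∀ Y ⊆ X, K * Y.card ≤ ((Y * S).card : ℝ))
    (heq : ((X * S).card : ℝ) = K * X.card)
    (C : Finset G) :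
    ((C * X * S).card : ℝ) ≤ K * (C * X).card := by
  induction C using Finset.induction_on with
  | empty => simp
  | @insert x C hxC ih =>
    set Y : Finset G := X ∩ (x⁻¹ • (C * X)) with hY
    have hYX : Y ⊆ X := Finset.inter_subset_left
    have hxY : x • Y = (x • X) ∩ (C * X) := by
      rw [hY, Finset.smul_finset_inter, smul_inv_smul]
    -- card of insert x C * X
    have hins : insert x C * X = (C * X) ∪ ((x • X) \ (C * X)) := by
      rw [Finset.insert_eq, Finset.union_mul, Finset.singleton_mul,
        Finset.union_sdiff_self_eq_union, Finset.union_comm]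
    have hsd : (x • X) \ (C * X) = (x • X) \ (x • Y) := by
      rw [hxY, Finset.sdiff_inter_self_left]
    have hxYsub : x • Y ⊆ x • X := Finset.smul_finset_subset_smul_finset hYX
    have hcard1 : ((insert x C * X).card : ℝ) = (C * X).card + X.card - Y.card := by
      rw [hins, Finset.card_union_of_disjoint Finset.disjoint_sdiff, hsd,
        Finset.card_sdiff_of_subset hxYsub, Finset.card_smul_finset, Finset.card_smul_finset]
      have : Y.card ≤ X.card := Finset.card_le_card hYX
      push_cast [Nat.cast_sub this]
      ring
    -- card of insert x C * X * S
    have hmulS : insert x C * X * S = (C * X * S) ∪ (x • (X * S)) := by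
      rw [Finset.insert_eq, Finset.union_mul, Finset.union_mul, Finset.singleton_mul,
        smul_mul_assoc, Finset.union_comm]
    have hYS : x • (Y * S) ⊆ C * X * S := by
      rw [← smul_mul_assoc, hxY]
      exact Finset.mul_subset_mul_right Finset.inter_subset_right
    have hYS' : x • (Y * S) ⊆ x • (X * S) :=
      Finset.smul_finset_subset_smul_finset (Finset.mul_subset_mul_right hYX)
    have h4 : (Y * S).card ≤ (X * S).card :=
      Finset.card_le_card (Finset.mul_subset_mul_right hYX)
    have hcard2 : ((insert x C * X * S).card : ℝ) ≤ (C * X * S).card + (X * S).card - (Y * S).card := by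
      have hsub : insert x C * X * S ⊆ (C * X * S) ∪ ((x • (X * S)) \ (x • (Y * S))) := by
        rw [hmulS]
        refine Finset.union_subset Finset.subset_union_left ?_
        intro a ha
        by_cases h : a ∈ x • (Y * S)
        · exact Finset.mem_union_left _ (hYS h)
        · exact Finset.mem_union_right _ (Finset.mem_sdiff.2 ⟨ha, h⟩)
      have h3 : ((x • (X * S)) \ (x • (Y * S))).card = (X * S).card - (Y * S).card := by
        rw [Finset.card_sdiff_of_subset hYS', Finset.card_smul_finset, Finset.card_smul_finset]
      have h5 : (insert x C * X * S).card ≤ (C * X * S).card + ((X * S).card - (Y * S).card) := by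
        calc (insert x C * X * S).card ≤ _ := Finset.card_le_card hsub
          _ ≤ _ := Finset.card_union_le _ _
          _ = _ := by rw [h3]
      have := (Nat.cast_le (α := ℝ)).2 h5
      push_cast [Nat.cast_sub h4] at this
      linarith
    have hlowY := hlow Y hYX
    rw [hcard1]
    linarith
end

section
/- Let A be a finite non-empty subset of a multiplicative group G with |A⁻¹·A| ≤ (2−ε)|A| for some ε > 0. Then for every x in A·A⁻¹, one has |A ∩ x·A| ≥ ε|A|. -/
open scoped Pointwise

theorem gap_bound_discrete {G : Type*} [Group G] [DecidableEq G]
    (A : Finset G) (hA : A.Nonempty) (ε : ℝ) (hε : 0 < ε)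
    (hdoub : ((A⁻¹ * A).card : ℝ) ≤ (2 - ε) * A.card) :
    ∀ x ∈ A * A⁻¹, ε * A.card ≤ ((A ∩ x • A).card : ℝ) := by
  intro x hx
  rw [Finset.mem_mul] at hx
  obtain ⟨a, ha, b', hb', rfl⟩ := hx
  rw [Finset.mem_inv] at hb'
  obtain ⟨b, hb, rfl⟩ := hb'
  have hsub : a⁻¹ • (A ∪ (a * b⁻¹) • A) ⊆ A⁻¹ * A := by
    rw [Finset.smul_finset_union]
    apply Finset.union_subset
    · intro y hy
      rw [Finset.mem_smul_finset] at hy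
      obtain ⟨z, hz, rfl⟩ := hy
      exact Finset.mul_mem_mul (Finset.inv_mem_inv ha) hz
    · rw [smul_smul]
      intro y hy
      rw [Finset.mem_smul_finset] at hy
      obtain ⟨z, hz, rfl⟩ := hy
      simp only [smul_eq_mul, inv_mul_cancel_left]
      exact Finset.mul_mem_mul (Finset.inv_mem_inv hb) hz
  have hcard : (A ∪ (a * b⁻¹) • A).card ≤ (A⁻¹ * A).card := by
    rw [← Finset.card_smul_finset a⁻¹ (A ∪ (a * b⁻¹) • A)]
    exact Finset.card_le_card hsub
  have hkey : A.card + ((a * b⁻¹) • A).card =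
      (A ∪ (a * b⁻¹) • A).card + (A ∩ (a * b⁻¹) • A).card :=
    (Finset.card_union_add_card_inter _ _).symm
  have hAx : ((a * b⁻¹) • A).card = A.card := Finset.card_smul_finset _ _
  have : (ε : ℝ) * A.card ≤ 2 * A.card - (A⁻¹ * A).card := by linarith
  refine this.trans ?_
  have h2 : (2 : ℝ) * A.card - (A⁻¹ * A).card ≤
      2 * A.card - (A ∪ (a * b⁻¹) • A).card := by
    have := (Nat.cast_le (α := ℝ)).2 hcard
    linarith
  refine h2.trans ?_
  have := (Nat.cast_le (α := ℝ)).2 hkey.le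
  push_cast at this ⊢
  have hAx' : (((a * b⁻¹) • A).card : ℝ) = A.card := by exact_mod_cast hAx
  linarith
end

section
/- Let G be a locally compact Hausdorff topological group with a bi-invariant Haar measure μ, and let A ⊆ G be open, precompact, and non-empty with μ(A⁻¹·A) ≤ (2−ε)μ(A) for some ε > 0. Then for every x ∈ A·A⁻¹, one has μ(A ∩ x·A) ≥ ε·μ(A). -/
open scoped Pointwise ENNReal
open MeasureTheory

/-!
For `x = a * b⁻¹` with `a, b ∈ A`, left translation by `a⁻¹` carries `A ∪ x • A` onto
`a⁻¹ • A ∪ b⁻¹ • A ⊆ A⁻¹ * A`. Inclusion–exclusion for `A` and `x • A` then gives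
`2 μ(A) ≤ μ(A⁻¹ * A) + μ(A ∩ x • A)`, and the doubling hypothesis leaves `ε μ(A)` for the
intersection.
-/

theorem Set.exists_smul_union_smul_subset_inv_mul {G : Type*} [Group G] {A : Set G} {x : G}
    (hx : x ∈ A * A⁻¹) : ∃ g : G, g • (A ∪ x • A) ⊆ A⁻¹ * A := by
  obtain ⟨a, ha, c, hc, rfl⟩ := hx
  refine ⟨a⁻¹, ?_⟩
  rw [Set.smul_set_union, smul_smul, inv_mul_cancel_left]
  rintro _ (⟨y, hy, rfl⟩ | ⟨y, hy, rfl⟩)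
  · exact Set.mul_mem_mul (Set.inv_mem_inv.mpr ha) hy
  · exact Set.mul_mem_mul hc hy

section LeftInvariant

variable {G : Type*} [Group G] [MeasurableSpace G]
  (μ : Measure G) [μ.IsMulLeftInvariant]

theorem measure_union_smul_le_measure_inv_mul {A : Set G} {x : G} (hx : x ∈ A * A⁻¹) :
    μ (A ∪ x • A) ≤ μ (A⁻¹ * A) := by
  obtain ⟨g, hg⟩ := Set.exists_smul_union_smul_subset_inv_mul hx
  calc μ (A ∪ x • A) = μ (g • (A ∪ x • A)) := (measure_smul μ g _).symm
    _ ≤ μ (A⁻¹ * A) := measure_mono hg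

theorem two_mul_measure_le_measure_inv_mul_add_measure_inter_smul {A : Set G}
    (hA : MeasurableSet A) {x : G} (hx : x ∈ A * A⁻¹) :
    2 * μ A ≤ μ (A⁻¹ * A) + μ (A ∩ x • A) :=
  calc 2 * μ A = μ A + μ (x • A) := by rw [measure_smul, two_mul]
    _ = μ (A ∪ x • A) + μ (A ∩ x • A) := (measure_union_add_inter' hA _).symm
    _ ≤ μ (A⁻¹ * A) + μ (A ∩ x • A) :=
      add_le_add_left (measure_union_smul_le_measure_inv_mul μ hx) _

end LeftInvariant

theorem ENNReal.ofReal_mul_le_of_two_mul_le {m c : ℝ≥0∞} {ε : ℝ} (hm : m ≠ ∞) (hcm : c ≤ m)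
    (h : 2 * m ≤ ENNReal.ofReal (2 - ε) * m + c) : ENNReal.ofReal ε * m ≤ c := by
  rcases le_or_gt ε 0 with hε0 | hε0
  · simp [ENNReal.ofReal_of_nonpos hε0]
  rcases le_or_gt ε 2 with hε2 | hε2
  · have hsplit : ENNReal.ofReal (2 - ε) + ENNReal.ofReal ε = 2 := by
      rw [← ENNReal.ofReal_add (by linarith) hε0.le]; norm_num
    have hfin : ENNReal.ofReal (2 - ε) * m ≠ ∞ := ENNReal.mul_ne_top ENNReal.ofReal_ne_top hm
    refine (ENNReal.add_le_add_iff_left hfin).mp ?_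
    rwa [← add_mul, hsplit]
  · rw [ENNReal.ofReal_of_nonpos (by linarith), zero_mul, zero_add] at h
    have hm0 : m = 0 := by
      by_contra hm0
      have : 2 * m ≤ 1 * m := by rw [one_mul]; exact h.trans hcm
      exact absurd ((ENNReal.mul_le_mul_iff_left hm0 hm).mp this) (by norm_num)
    simp [hm0]

theorem gap_bound_continuous_general {G : Type*} [Group G] [TopologicalSpace G]
    [MeasurableSpace G] [BorelSpace G]
    (μ : MeasureTheory.Measure G) [μ.IsHaarMeasure]
    (A : Set G) (hopen : IsOpen A) (hpre : IsCompact (closure A))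
    (ε : ℝ)
    (hdoub : μ (A⁻¹ * A) ≤ ENNReal.ofReal (2 - ε) * μ A) :
    ∀ x ∈ A * A⁻¹, ENNReal.ofReal ε * μ A ≤ μ (A ∩ x • A) := by
  intro x hx
  have hfin : μ A ≠ ∞ := (measure_mono subset_closure).trans_lt hpre.measure_lt_top |>.ne
  refine ENNReal.ofReal_mul_le_of_two_mul_le hfin (measure_mono Set.inter_subset_left) ?_
  calc 2 * μ A ≤ μ (A⁻¹ * A) + μ (A ∩ x • A) :=
        two_mul_measure_le_measure_inv_mul_add_measure_inter_smul μ hopen.measurableSet hx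
    _ ≤ ENNReal.ofReal (2 - ε) * μ A + μ (A ∩ x • A) := by gcongr

theorem gap_bound_continuous {G : Type*} [Group G] [TopologicalSpace G]
    [IsTopologicalGroup G] [LocallyCompactSpace G] [T2Space G]
    [MeasurableSpace G] [BorelSpace G]
    (μ : MeasureTheory.Measure G) [μ.IsHaarMeasure] [μ.IsMulRightInvariant]
    (A : Set G) (hopen : IsOpen A) (hpre : IsCompact (closure A)) (hne : A.Nonempty)
    (ε : ℝ) (hε : 0 < ε)
    (hdoub : μ (A⁻¹ * A) ≤ ENNReal.ofReal (2 - ε) * μ A) :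
    ∀ x ∈ A * A⁻¹, ENNReal.ofReal ε * μ A ≤ μ (A ∩ x • A) :=
  gap_bound_continuous_general μ A hopen hpre ε hdoub
end

section
/- Let G be a locally compact Hausdorff group with bi-invariant Haar measure μ, and A ⊆ G open, precompact, non-empty with μ(A⁻¹·A) ≤ (2−ε)μ(A) for some ε > 0. Then there exists a compact open subgroup H of G such that A·A⁻¹ is a union of finitely many right cosets of H. -/
open scoped Pointwise ENNReal Topology
open MeasureTheory Measure Set Filter

/-!
If `μ (A⁻¹ * A) < 2 μ A`, then for `a, b ∈ A` the translates `a⁻¹ A` and `b⁻¹ A` both lie in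
`A⁻¹ A`, so inclusion–exclusion gives `μ (a b⁻¹ A ∩ A) ≥ c := 2 μ A - μ (A⁻¹ A) > 0`: every point
of `S = A A⁻¹` moves `A` by a definite amount. Since translation is continuous in measure, a point
`g ∉ S` (for which `g A ∩ A = ∅`) has a neighbourhood where `μ (g' A ∩ A) < c`, so `S` is closed;
being open with compact closure, `S` is compact open. The stabilizer of a compact open set is an
open subgroup; it lies in `S` because `1 ∈ S`, so it is compact, and `S` is a finite union of its
right cosets by compactness.
-/

section TopologicalGroup

variable {G : Type*} [Group G] [TopologicalSpace G] [IsTopologicalGroup G]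

theorem isOpen_stabilizer_of_isCompact_of_isOpen {S : Set G} (hSc : IsCompact S)
    (hSo : IsOpen S) : IsOpen (MulAction.stabilizer G S : Set G) := by
  obtain ⟨V, hV, hVS⟩ := compact_open_separated_mul_left hSc hSo Subset.rfl
  have hsmul : ∀ g ∈ V, g • S ⊆ S := fun g hg => (smul_set_subset_smul hg).trans hVS
  refine Subgroup.isOpen_of_mem_nhds _ (mem_of_superset (inter_mem hV (inv_mem_nhds_one G hV)) ?_)
  rintro g ⟨hg, hg'⟩
  exact subset_antisymm (hsmul g hg) (subset_smul_set_iff.2 (hsmul g⁻¹ hg'))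

theorem exists_finset_eq_biUnion_mul_singleton_of_isCompact {H : Subgroup G}
    (hH : IsOpen (H : Set G)) {S : Set G} (hS : IsCompact S) (hHS : (H : Set G) * S ⊆ S) :
    ∃ T : Finset G, S = ⋃ t ∈ T, (H : Set G) * {t} := by
  have hcoset : ∀ s ∈ S, (H : Set G) * {s} ⊆ S := fun s hs =>
    (mul_subset_mul_left (singleton_subset_iff.2 hs)).trans hHS
  have hcover : S ⊆ ⋃ s ∈ S, (H : Set G) * {s} := fun s hs =>
    mem_biUnion hs ⟨1, H.one_mem, s, rfl, one_mul s⟩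
  obtain ⟨T, hTS, hT, hST⟩ := hS.elim_finite_subcover_image (fun _ _ => hH.mul_right) hcover
  refine ⟨hT.toFinset, subset_antisymm ?_ ?_⟩ <;> simp only [Finite.mem_toFinset]
  · exact hST
  · exact iUnion₂_subset fun t ht => hcoset t (hTS ht)

theorem exists_isCompact_isOpen_subgroup_eq_biUnion_mul_singleton {S : Set G}
    (hSc : IsCompact S) (hSo : IsOpen S) (h1 : (1 : G) ∈ S) :
    ∃ H : Subgroup G, IsCompact (H : Set G) ∧ IsOpen (H : Set G) ∧
      ∃ T : Finset G, S = ⋃ t ∈ T, (H : Set G) * {t} := by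
  set H := MulAction.stabilizer G S
  have hHo : IsOpen (H : Set G) := isOpen_stabilizer_of_isCompact_of_isOpen hSc hSo
  have hHS : (H : Set G) * S ⊆ S := by
    rintro _ ⟨h, hh, s, hs, rfl⟩
    rw [← MulAction.mem_stabilizer_iff.1 hh]
    exact smul_mem_smul_set hs
  have hHsub : (H : Set G) ⊆ S := fun h hh => by
    simpa using hHS (mul_mem_mul hh h1)
  exact ⟨H, hSc.of_isClosed_subset (H.isClosed_of_isOpen hHo) hHsub, hHo,
    exists_finset_eq_biUnion_mul_singleton_of_isCompact hHo hSc hHS⟩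

end TopologicalGroup

section Measure

variable {G : Type*} [Group G] [MeasurableSpace G] (μ : Measure G) [μ.IsMulLeftInvariant]

theorem two_mul_measure_le_measure_inv_mul_add_measure_smul_inter [MeasurableMul G] {A : Set G}
    (hA : MeasurableSet A) {g : G} (hg : g ∈ A * A⁻¹) :
    2 * μ A ≤ μ (A⁻¹ * A) + μ (g • A ∩ A) := by
  obtain ⟨a, ha, b', hb', rfl⟩ := hg
  obtain ⟨b, hb, rfl⟩ : ∃ b ∈ A, b⁻¹ = b' := ⟨b'⁻¹, hb', inv_inv b'⟩
  have hunion : a⁻¹ • A ∪ b⁻¹ • A ⊆ A⁻¹ * A :=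
    union_subset (smul_set_subset_mul (inv_mem_inv.2 ha)) (smul_set_subset_mul (inv_mem_inv.2 hb))
  have hinter : (a * b⁻¹) • A ∩ A = a • (b⁻¹ • A ∩ a⁻¹ • A) := by
    rw [smul_set_inter, smul_smul, smul_smul, mul_inv_cancel, one_smul]
  calc 2 * μ A = μ (a⁻¹ • A) + μ (b⁻¹ • A) := by rw [measure_smul, measure_smul, two_mul]
    _ = μ (a⁻¹ • A ∪ b⁻¹ • A) + μ (a⁻¹ • A ∩ b⁻¹ • A) :=
      (measure_union_add_inter _ (hA.const_smul _)).symm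
    _ ≤ μ (A⁻¹ * A) + μ ((a * b⁻¹) • A ∩ A) := by
      rw [hinter, measure_smul, inter_comm]
      gcongr

variable [TopologicalSpace G] [IsTopologicalGroup G] [BorelSpace G]

theorem eventually_nhds_one_measure_smul_sdiff_lt_of_isOpen [μ.InnerRegularCompactLTTop]
    {U : Set G} (hU : IsOpen U) (hμU : μ U ≠ ∞) {ε : ℝ≥0∞} (hε : ε ≠ 0) :
    ∀ᶠ g in 𝓝 (1 : G), μ (g • U \ U) < ε := by
  obtain ⟨K, hKU, hK, -, hμK⟩ := hU.measurableSet.exists_isCompact_isClosed_sdiff_lt hμU hε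
  obtain ⟨V, hV, hVK⟩ := compact_open_separated_mul_left hK hU hKU
  filter_upwards [hV] with g hg
  calc μ (g • U \ U) ≤ μ (g • (U \ K)) := by
        rw [smul_set_sdiff]
        exact measure_mono (sdiff_subset_sdiff_right ((smul_set_subset_smul hg).trans hVK))
    _ < ε := by rwa [measure_smul]

theorem isClosed_mul_inv_of_measure_inv_mul_lt [μ.InnerRegularCompactLTTop] {A : Set G}
    (hA : IsOpen A) (hμA : μ A ≠ ∞) (hdoub : μ (A⁻¹ * A) < 2 * μ A) : IsClosed (A * A⁻¹) := by
  set c := 2 * μ A - μ (A⁻¹ * A)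
  have hc : c ≠ 0 := (tsub_pos_of_lt hdoub).ne'
  have hlarge : ∀ g ∈ A * A⁻¹, c ≤ μ (g • A ∩ A) := fun g hg =>
    tsub_le_iff_left.2 <|
      two_mul_measure_le_measure_inv_mul_add_measure_smul_inter μ hA.measurableSet hg
  refine isOpen_compl_iff.1 (isOpen_iff_mem_nhds.2 fun g₀ hg₀ => ?_)
  have hdisj : g₀ • A ∩ A = ∅ := by
    rw [← not_nonempty_iff_eq_empty, smul_inter_nonempty_iff]
    rintro ⟨a, b, ⟨ha, hb⟩, rfl⟩
    exact hg₀ (mul_mem_mul ha (inv_mem_inv.2 hb))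
  have htendsto : Tendsto (fun g => g₀⁻¹ * g) (𝓝 g₀) (𝓝 1) := by
    simpa using (continuous_const_mul g₀⁻¹).tendsto g₀
  have hsmall := eventually_nhds_one_measure_smul_sdiff_lt_of_isOpen μ hA hμA hc
  filter_upwards [htendsto.eventually hsmall] with g hg hgS
  have hsub : g • A ∩ A ⊆ g₀ • ((g₀⁻¹ * g) • A \ A) := by
    rw [smul_set_sdiff, smul_smul, mul_inv_cancel_left]
    exact fun x ⟨hxg, hxA⟩ => ⟨hxg, fun hx₀ => hdisj.subset ⟨hx₀, hxA⟩⟩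
  exact (hlarge g hgS).not_gt ((measure_mono hsub).trans_lt (by rwa [measure_smul]))

end Measure

theorem measure_lt_mul_measure_of_isHaarMeasure {G : Type*} [Group G] [TopologicalSpace G]
    [IsTopologicalGroup G] [LocallyCompactSpace G] [MeasurableSpace G] [BorelSpace G]
    (μ ν : Measure G) [μ.IsHaarMeasure] [ν.IsHaarMeasure] {s t : Set G}
    (hs : IsCompact (closure s)) (ht : IsCompact (closure t)) {k : ℝ≥0∞} (h : μ s < k * μ t) :
    ν s < k * ν t := by
  have hr : (haarScalarFactor μ ν : ℝ≥0∞) ≠ 0 := by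
    exact_mod_cast (haarScalarFactor_pos_of_isHaarMeasure μ ν).ne'
  rw [measure_isMulInvariant_eq_smul_of_isCompact_closure μ ν hs,
    measure_isMulInvariant_eq_smul_of_isCompact_closure μ ν ht, ENNReal.smul_def,
    ENNReal.smul_def, smul_eq_mul, smul_eq_mul, mul_left_comm] at h
  exact (ENNReal.mul_lt_mul_iff_right hr ENNReal.coe_ne_top).1 h

theorem continuous_small_doubling_general {G : Type*} [Group G] [TopologicalSpace G]
    [IsTopologicalGroup G] [LocallyCompactSpace G]
    [MeasurableSpace G] [BorelSpace G]
    (μ : MeasureTheory.Measure G) [μ.IsHaarMeasure]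
    (A : Set G) (hopen : IsOpen A) (hpre : IsCompact (closure A)) (hne : A.Nonempty)
    (ε : ℝ) (hε : 0 < ε)
    (hdoub : μ (A⁻¹ * A) ≤ ENNReal.ofReal (2 - ε) * μ A) :
    ∃ H : Subgroup G, IsCompact (H : Set G) ∧ IsOpen (H : Set G) ∧
      ∃ T : Finset G, A * A⁻¹ = ⋃ t ∈ T, (H : Set G) * {t} := by
  have hfin : ∀ (ν : Measure G) [IsFiniteMeasureOnCompacts ν], ν A ≠ ∞ := fun _ _ =>
    ((measure_mono subset_closure).trans_lt hpre.measure_lt_top).ne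
  have hlt : μ (A⁻¹ * A) < 2 * μ A :=
    hdoub.trans_lt ((ENNReal.mul_lt_mul_iff_left (hopen.measure_ne_zero μ hne) (hfin μ)).2
      (ENNReal.ofReal_lt_ofNat.2 (by linarith)))
  -- pass to a regular Haar measure, where inner regularity is available
  obtain ⟨K₀⟩ : Nonempty (TopologicalSpace.PositiveCompacts G) := inferInstance
  have hclosed : IsClosed (A * A⁻¹) :=
    isClosed_mul_inv_of_measure_inv_mul_lt (haarMeasure K₀) hopen (hfin _)
      (measure_lt_mul_measure_of_isHaarMeasure μ _
        ((hpre.inv.mul hpre).closure_of_subset (mul_subset_mul (inv_subset_inv.2 subset_closure)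
          subset_closure)) hpre hlt)
  obtain ⟨a, ha⟩ := hne
  exact exists_isCompact_isOpen_subgroup_eq_biUnion_mul_singleton
    ((hpre.mul hpre.inv).of_isClosed_subset hclosed
      (mul_subset_mul subset_closure (inv_subset_inv.2 subset_closure)))
    hopen.mul_right (mul_inv_cancel a ▸ mul_mem_mul ha (inv_mem_inv.2 ha))

theorem continuous_small_doubling {G : Type*} [Group G] [TopologicalSpace G]
    [IsTopologicalGroup G] [LocallyCompactSpace G] [T2Space G]
    [MeasurableSpace G] [BorelSpace G]
    (μ : MeasureTheory.Measure G) [μ.IsHaarMeasure] [μ.IsMulRightInvariant]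
    (A : Set G) (hopen : IsOpen A) (hpre : IsCompact (closure A)) (hne : A.Nonempty)
    (ε : ℝ) (hε : 0 < ε)
    (hdoub : μ (A⁻¹ * A) ≤ ENNReal.ofReal (2 - ε) * μ A) :
    ∃ H : Subgroup G, IsCompact (H : Set G) ∧ IsOpen (H : Set G) ∧
      ∃ T : Finset G, A * A⁻¹ = ⋃ t ∈ T, (H : Set G) * {t} :=
  continuous_small_doubling_general μ A hopen hpre hne ε hε hdoub
end

section
/- Let G be a topological group and A an open precompact non-empty subset such that the function f(x) = μ(A ∩ x·A)/μ(A) (where μ is a bi-invariant Haar measure) satisfies f(x) ≥ ε for all x in its support A·A⁻¹. Then A·A⁻¹ is both open and closed, and hence compact. -/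
/-!
Approximate `A` from inside by a compact `K` with `μ (A \ K) < ε μ(A) / 2`. For `y ∈ A * A⁻¹`
the set `K ∩ y • K` then still has positive measure, so `y ∈ K * K⁻¹`. Hence `A * A⁻¹ = K * K⁻¹`
is compact, and therefore closed.
-/

open scoped Pointwise

open MeasureTheory Set

/- An arbitrary Haar measure need not be inner regular, but it agrees with the regular `haar` up to
a constant on sets with compact closure. -/
theorem MeasureTheory.Measure.exists_isCompact_subset_measure_sdiff_lt {G : Type*} [Group G]
    [TopologicalSpace G] [IsTopologicalGroup G] [LocallyCompactSpace G] [T2Space G]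
    [MeasurableSpace G] [BorelSpace G] (μ : Measure G) [μ.IsHaarMeasure] {A : Set G}
    (hA : MeasurableSet A) (hcl : IsCompact (closure A)) {δ : ENNReal} (hδ : δ ≠ 0) :
    ∃ K ⊆ A, IsCompact K ∧ μ (A \ K) < δ := by
  obtain ⟨K, hKA, hK, hAK⟩ := hA.exists_isCompact_sdiff_lt
    (hcl.measure_lt_top.trans_le' (measure_mono subset_closure)).ne
    (ENNReal.div_pos hδ ENNReal.coe_ne_top).ne' (μ := haar)
  refine ⟨K, hKA, hK, ?_⟩
  rw [measure_isMulInvariant_eq_smul_of_isCompact_closure μ haar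
    (hcl.of_isClosed_subset isClosed_closure (closure_mono sdiff_subset))]
  exact ENNReal.mul_lt_of_lt_div' hAK

theorem MeasureTheory.measure_inter_smul_le {G : Type*} [Group G] [MeasurableSpace G]
    [MeasurableMul G] (μ : Measure G) [μ.IsMulLeftInvariant] (K A : Set G) (y : G) :
    μ (A ∩ y • A) ≤ μ (K ∩ y • K) + 2 * μ (A \ K) := by
  have hcover : A ∩ y • A ⊆ (K ∩ y • K) ∪ (A \ K) ∪ y • (A \ K) := by
    rw [smul_set_sdiff]
    intro a ⟨ha, hya⟩
    by_cases haK : a ∈ K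
    · by_cases hyaK : a ∈ y • K
      · exact Or.inl (Or.inl ⟨haK, hyaK⟩)
      · exact Or.inr ⟨hya, hyaK⟩
    · exact Or.inl (Or.inr ⟨ha, haK⟩)
  calc μ (A ∩ y • A) ≤ μ ((K ∩ y • K) ∪ (A \ K) ∪ y • (A \ K)) := measure_mono hcover
    _ ≤ μ (K ∩ y • K) + μ (A \ K) + μ (y • (A \ K)) :=
      (measure_union_le _ _).trans (by gcongr; exact measure_union_le _ _)
    _ = μ (K ∩ y • K) + 2 * μ (A \ K) := by rw [measure_smul, two_mul, add_assoc]

theorem Set.mem_mul_inv_of_inter_smul_nonempty {G : Type*} [Group G] {K : Set G} {y : G}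
    (h : (K ∩ y • K).Nonempty) : y ∈ K * K⁻¹ := by
  obtain ⟨a, b, ⟨ha, hb⟩, rfl⟩ := smul_inter_nonempty_iff.mp (inter_comm K _ ▸ h)
  exact mul_mem_mul ha (inv_mem_inv.mpr hb)

theorem MeasureTheory.mul_inv_eq_of_le_measure_inter_smul {G : Type*} [Group G]
    [MeasurableSpace G] [MeasurableMul G] (μ : Measure G) [μ.IsMulLeftInvariant] {K A : Set G}
    (hKA : K ⊆ A) {δ : ENNReal} (hAK : 2 * μ (A \ K) < δ)
    (hgap : ∀ y ∈ A * A⁻¹, δ ≤ μ (A ∩ y • A)) : A * A⁻¹ = K * K⁻¹ := by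
  refine subset_antisymm (fun y hy => mem_mul_inv_of_inter_smul_nonempty ?_)
    (mul_subset_mul hKA (inv_subset_inv.mpr hKA))
  refine nonempty_of_measure_ne_zero (μ := μ) fun h0 => ?_
  have hle := (hgap y hy).trans (measure_inter_smul_le μ K A y)
  rw [h0, zero_add] at hle
  exact (hle.trans_lt hAK).false

theorem support_clopen_general {G : Type*} [Group G] [TopologicalSpace G]
    [IsTopologicalGroup G] [LocallyCompactSpace G] [T2Space G]
    [MeasurableSpace G] [BorelSpace G]
    (μ : MeasureTheory.Measure G) [μ.IsHaarMeasure]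
    (A : Set G) (hopen : IsOpen A) (hpre : IsCompact (closure A)) (hne : A.Nonempty)
    (ε : ℝ) (hε : 0 < ε)
    (hgap : ∀ x ∈ A * A⁻¹, ENNReal.ofReal ε * μ A ≤ μ (A ∩ x • A)) :
    IsOpen (A * A⁻¹) ∧ IsClosed (A * A⁻¹) ∧ IsCompact (A * A⁻¹) := by
  have hδ : ENNReal.ofReal ε * μ A / 2 ≠ 0 :=
    ENNReal.div_ne_zero.mpr ⟨mul_ne_zero (ENNReal.ofReal_pos.mpr hε).ne'
      (hopen.measure_ne_zero μ hne), ENNReal.ofNat_ne_top⟩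
  obtain ⟨K, hKA, hK, hAK⟩ :=
    μ.exists_isCompact_subset_measure_sdiff_lt hopen.measurableSet hpre hδ
  have hcompact : IsCompact (A * A⁻¹) := by
    rw [mul_inv_eq_of_le_measure_inter_smul μ hKA (ENNReal.mul_lt_of_lt_div' hAK) hgap]
    exact hK.mul hK.inv
  exact ⟨hopen.mul_right, hcompact.isClosed, hcompact⟩

theorem support_clopen {G : Type*} [Group G] [TopologicalSpace G]
    [IsTopologicalGroup G] [LocallyCompactSpace G] [T2Space G]
    [MeasurableSpace G] [BorelSpace G]
    (μ : MeasureTheory.Measure G) [μ.IsHaarMeasure] [μ.IsMulRightInvariant]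
    (A : Set G) (hopen : IsOpen A) (hpre : IsCompact (closure A)) (hne : A.Nonempty)
    (ε : ℝ) (hε : 0 < ε)
    (hgap : ∀ x ∈ A * A⁻¹, ENNReal.ofReal ε * μ A ≤ μ (A ∩ x • A)) :
    IsOpen (A * A⁻¹) ∧ IsClosed (A * A⁻¹) ∧ IsCompact (A * A⁻¹) :=
  support_clopen_general μ A hopen hpre hne ε hε hgap
end

section
/- Let G be a group, H a finite subgroup, S a finite subset intersecting at least two distinct right cosets of H, and suppose |H·S| ≤ (1−ε/2)|S| + (1−ε/2)|H| for some ε > 0. Then |H| ≤ |S| and H·S can be covered by at most 2/ε − 1 right cosets of H. -/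
open scoped Pointwise

theorem coset_covering {G : Type*} [Group G] [DecidableEq G]
    (H : Subgroup G) (hHfin : (H : Set G).Finite) (S : Finset G)
    (hS : S.Nonempty)
    (htwo : ∃ s₁ ∈ S, ∃ s₂ ∈ S, (H : Set G) * {s₁} ≠ (H : Set G) * {s₂})
    (ε : ℝ) (hε : 0 < ε)
    (hHS : (Nat.card ((H : Set G) * (S : Set G) : Set G) : ℝ)
      ≤ (1 - ε / 2) * S.card + (1 - ε / 2) * Nat.card H) :
    (Nat.card H : ℝ) ≤ S.card ∧
      ∃ T : Finset G, (T.card : ℝ) ≤ 2 / ε - 1 ∧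
        (H : Set G) * (S : Set G) ⊆ ⋃ t ∈ T, (H : Set G) * {t} := by
  classical
  obtain ⟨s₁, hs₁, s₂, hs₂, hne⟩ := htwo
  set Hf : Finset G := hHfin.toFinset with hHfdef
  have hHcoe : (Hf : Set G) = (H : Set G) := hHfin.coe_toFinset
  have h1H : (1 : G) ∈ Hf := by
    rw [hHfdef, Set.Finite.mem_toFinset]; exact one_mem H
  -- membership in a right coset
  have mem_coset : ∀ x b : G, x ∈ (H : Set G) * {b} ↔ x * b⁻¹ ∈ H := by
    intro x b
    constructor
    · rintro ⟨h, hh, y, hy, rfl⟩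
      simp only [Set.mem_singleton_iff] at hy
      subst hy
      simpa using hh
    · intro hx
      exact ⟨x * b⁻¹, hx, b, rfl, by group⟩
  have coset_iff : ∀ a b : G, (H : Set G) * {a} = (H : Set G) * {b} ↔ a * b⁻¹ ∈ H := by
    intro a b
    constructor
    · intro hab
      have : a ∈ (H : Set G) * {b} := by
        rw [← hab, mem_coset]; simpa using one_mem H
      exact (mem_coset a b).1 this
    · intro hab
      ext x
      rw [mem_coset, mem_coset]
      constructor
      · intro h
        have := mul_mem h hab
        simpa [mul_assoc] using this
      · intro h
        have := mul_mem h (inv_mem hab)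
        simpa [mul_assoc] using this
  -- quotient bookkeeping
  let f : G → G ⧸ H := fun g => QuotientGroup.mk g⁻¹
  have f_iff : ∀ a b : G, f a = f b ↔ a * b⁻¹ ∈ H := by
    intro a b
    rw [show f a = QuotientGroup.mk a⁻¹ from rfl, show f b = QuotientGroup.mk b⁻¹ from rfl,
      QuotientGroup.eq]
    simp
  let rep : G ⧸ H → G := fun q => q.out⁻¹
  have f_rep : ∀ q : G ⧸ H, f (rep q) = q := by
    intro q
    show QuotientGroup.mk (q.out⁻¹)⁻¹ = q
    rw [inv_inv]
    exact Quotient.out_eq q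
  have rep_inj : Function.Injective rep :=
    fun a b h => Quotient.out_injective (inv_injective h)
  set T : Finset G := (S.image f).image rep with hTdef
  -- coset of rep equals coset of s
  have coset_rep : ∀ s : G, (H : Set G) * {rep (f s)} = (H : Set G) * {s} := by
    intro s
    rw [coset_iff, ← f_iff, f_rep]
  -- finset cosets
  have fin_coset_eq : ∀ s : G, Hf * {rep (f s)} = Hf * {s} := by
    intro s
    apply Finset.coe_injective
    rw [Finset.coe_mul, Finset.coe_mul, Finset.coe_singleton, Finset.coe_singleton, hHcoe]
    exact coset_rep s
  have mem_fin_coset : ∀ x b : G, x ∈ Hf * {b} ↔ x * b⁻¹ ∈ H := by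
    intro x b
    rw [← Finset.mem_coe, Finset.coe_mul, Finset.coe_singleton, hHcoe]
    exact mem_coset x b
  set B : Finset G := T.biUnion (fun t => Hf * {t}) with hBdef
  have hBeq : Hf * S = B := by
    apply Finset.Subset.antisymm
    · intro x hx
      rw [Finset.mem_mul] at hx
      obtain ⟨a, ha, b, hb, rfl⟩ := hx
      rw [hBdef, Finset.mem_biUnion]
      refine ⟨rep (f b), ?_, ?_⟩
      · rw [hTdef]
        exact Finset.mem_image_of_mem rep (Finset.mem_image_of_mem f hb)
      · rw [fin_coset_eq, Finset.mem_mul]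
        exact ⟨a, ha, b, Finset.mem_singleton_self b, rfl⟩
    · intro x hx
      rw [hBdef, Finset.mem_biUnion] at hx
      obtain ⟨t, ht, hxt⟩ := hx
      rw [hTdef, Finset.mem_image] at ht
      obtain ⟨q, hq, rfl⟩ := ht
      rw [Finset.mem_image] at hq
      obtain ⟨s, hs, rfl⟩ := hq
      rw [fin_coset_eq] at hxt
      rw [Finset.mem_mul] at hxt
      obtain ⟨a, ha, b, hb, rfl⟩ := hxt
      rw [Finset.mem_singleton] at hb
      rw [Finset.mem_mul]
      exact ⟨a, ha, b, hb ▸ hs, rfl⟩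
  -- cardinality of B
  have card_coset : ∀ t : G, (Hf * {t}).card = Hf.card := by
    intro t
    rw [Finset.mul_singleton]
    exact Finset.card_image_of_injective _ (mul_left_injective t)
  have hdisj : ∀ t₁ ∈ T, ∀ t₂ ∈ T, t₁ ≠ t₂ → Disjoint (Hf * {t₁}) (Hf * {t₂}) := by
    intro t₁ ht₁ t₂ ht₂ hne12
    rw [Finset.disjoint_left]
    intro x hx1 hx2
    rw [mem_fin_coset] at hx1 hx2
    have ht : t₁ * t₂⁻¹ ∈ H := by
      have := mul_mem (inv_mem hx1) hx2
      simpa [mul_assoc] using this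
    rw [hTdef, Finset.mem_image] at ht₁ ht₂
    obtain ⟨q₁, _, rfl⟩ := ht₁
    obtain ⟨q₂, _, rfl⟩ := ht₂
    rw [← f_iff, f_rep, f_rep] at ht
    exact hne12 (by rw [ht])
  have hBcard : B.card = T.card * Hf.card := by
    rw [hBdef, Finset.card_biUnion hdisj]
    rw [Finset.sum_congr rfl (fun t _ => card_coset t), Finset.sum_const, smul_eq_mul]
  -- T has at least two elements
  have ht1 : rep (f s₁) ∈ T := Finset.mem_image_of_mem rep (Finset.mem_image_of_mem f hs₁)
  have ht2 : rep (f s₂) ∈ T := Finset.mem_image_of_mem rep (Finset.mem_image_of_mem f hs₂)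
  have hrne : rep (f s₁) ≠ rep (f s₂) := by
    intro h
    have h' := rep_inj h
    rw [f_iff] at h'
    exact hne ((coset_iff _ _).2 h')
  have hT2 : 2 ≤ T.card := Finset.one_lt_card.2 ⟨_, ht1, _, ht2, hrne⟩
  -- Nat.card conversions
  have hNS : Nat.card ((H : Set G) * (S : Set G) : Set G) = T.card * Hf.card := by
    have : ((H : Set G) * (S : Set G)) = ((Hf * S : Finset G) : Set G) := by
      rw [Finset.coe_mul, hHcoe]
    rw [this, Nat.card_coe_set_eq, Set.ncard_coe_finset, hBeq, hBcard]
  have hNH : Nat.card H = Hf.card := Nat.card_eq_card_finite_toFinset hHfin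
  -- S ⊆ Hf * S
  have hSsub : S ⊆ Hf * S := by
    intro s hs
    rw [Finset.mem_mul]
    exact ⟨1, h1H, s, hs, one_mul s⟩
  have hScard : S.card ≤ T.card * Hf.card := by
    have := Finset.card_le_card hSsub
    rwa [hBeq, hBcard] at this
  have hHpos : 0 < Hf.card := Finset.card_pos.2 ⟨1, h1H⟩
  -- real arithmetic
  rw [hNS, hNH] at hHS
  push_cast at hHS
  have hsm : (S.card : ℝ) ≤ (T.card : ℝ) * Hf.card := by exact_mod_cast hScard
  have hn2 : (2 : ℝ) ≤ (T.card : ℝ) := by exact_mod_cast hT2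
  have hh1 : (1 : ℝ) ≤ (Hf.card : ℝ) := by exact_mod_cast hHpos
  have hs0 : (0 : ℝ) ≤ (S.card : ℝ) := by positivity
  have hc0 : (0 : ℝ) ≤ (Hf.card : ℝ) := by linarith
  have h2h : 2 * (Hf.card : ℝ) ≤ (T.card : ℝ) * Hf.card :=
    mul_le_mul_of_nonneg_right hn2 hc0
  constructor
  · rw [hNH]
    nlinarith [mul_nonneg (le_of_lt hε) hs0, mul_nonneg (le_of_lt hε) hc0]
  · refine ⟨T, ?_, ?_⟩
    · have key : ε * T.card ≤ 2 - ε := by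
        rcases le_or_gt ε 2 with hle | hgt
        · have hcoef : (0 : ℝ) ≤ 1 - ε / 2 := by linarith
          have hp := mul_le_mul_of_nonneg_left hsm hcoef
          nlinarith [hp, hHS, hh1, hε, hn2]
        · have p1 : (0 : ℝ) ≤ (ε - 2) * S.card :=
            mul_nonneg (by linarith) hs0
          have p2 : (0 : ℝ) ≤ (ε - 2) * Hf.card :=
            mul_nonneg (by linarith) hc0
          nlinarith [hHS, h2h, hh1, p1, p2]
      rw [show (2 : ℝ) / ε - 1 = (2 - ε) / ε by field_simp, le_div_iff₀ hε]
      nlinarith [key]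
    · intro x hx
      have hxB : x ∈ (B : Set G) := by
        rw [← hBeq, Finset.coe_mul, hHcoe]
        exact hx
      rw [Finset.coe_biUnion] at hxB
      simp only [Set.mem_iUnion, Finset.mem_coe] at hxB
      obtain ⟨t, ht, hxt⟩ := hxB
      rw [Set.mem_iUnion₂]
      refine ⟨t, ht, ?_⟩
      rw [← hHcoe, ← Finset.coe_singleton, ← Finset.coe_mul]
      exact hxt
end
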